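/- arXiv:1101.2647 — 3 statements merged into one kernel-verified Lean document; each statement's English description precedes it below -/
import Mathlib

section
/- Let K be a field, l ≥ 1, and let θ_1, …, θ_l ∈ K be pairwise distinct. Writing θ_{jk} := θ_j − θ_k, the following identity holds: ∏_{j=1}^{l−1} (θ_{jl} − 1)/θ_{jl} + Σ_{k=1}^{l−1} (1/θ_{kl}) · ∏_{j=1, j≠k}^{l−1} (θ_{jk} − 1)/θ_{jk} = 1. (This expresses that the sum of the coefficients in the expansion of t_l through the new generators t°_k in the diagonal reduction algebra equals 1.) -/
/-!
The polynomials `∏ (X - θⱼ + c)` and `∏ (X - θⱼ)` over `1 ≤ j < l` are both monic of degree `l - 1`, so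
their difference is determined by its values at the nodes `θⱼ`, where the second one vanishes.
Lagrange interpolation in barycentric form, evaluated at `x = θₗ` and divided by `∏ (x - θⱼ)`,
is the partial fraction expansion of `∏ (x - θⱼ + c) / (x - θⱼ)`; with `c = 1` and all signs
flipped, this is the identity.
-/

open Finset Polynomial Lagrange

namespace Lagrange

variable {F ι : Type*} [Field F] {s : Finset ι} {v : ι → F}

theorem eval_eq_eval_nodal_mul_sum [DecidableEq ι] {p : F[X]} {x : F} (hvs : Set.InjOn v s)
    (hp : p.degree < #s) (hx : ∀ i ∈ s, x ≠ v i) :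
    p.eval x = (nodal s v).eval x * ∑ i ∈ s, nodalWeight s v i * (x - v i)⁻¹ * p.eval (v i) := by
  conv_lhs => rw [eq_interpolate hvs hp]
  exact eval_interpolate_not_at_node _ hx

theorem degree_nodal_sub_nodal_lt (w : ι → F) : (nodal s w - nodal s v).degree < #s := by
  rw [← degree_nodal (s := s) (v := w)]
  exact degree_sub_lt_left (by rw [degree_nodal, degree_nodal]) nodal_ne_zero
    (by rw [nodal_monic.leadingCoeff, nodal_monic.leadingCoeff])

end Lagrange

section PartialFractions

variable {F ι : Type*} [Field F] [DecidableEq ι] {s : Finset ι} {v : ι → F}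

theorem prod_sub_add_div_sub_eq_one_add_mul_sum (hvs : Set.InjOn v s) (c : F) {x : F}
    (hx : ∀ i ∈ s, x ≠ v i) :
    ∏ i ∈ s, (x - v i + c) / (x - v i) =
      1 + c * ∑ k ∈ s, (∏ j ∈ s.erase k, (v k - v j + c) / (v k - v j)) / (x - v k) := by
  have hshift : ∀ y, (nodal s (fun i => v i - c)).eval y = ∏ i ∈ s, (y - v i + c) := fun y => by
    simp only [eval_nodal, sub_sub_eq_add_sub, add_sub_right_comm]
  have key :=
    eval_eq_eval_nodal_mul_sum hvs (degree_nodal_sub_nodal_lt (v := v) (fun i => v i - c)) hx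
  have hnode : ∀ k ∈ s,
      nodalWeight s v k * (x - v k)⁻¹ * (nodal s (fun i => v i - c) - nodal s v).eval (v k) =
        c * ((∏ j ∈ s.erase k, (v k - v j + c) / (v k - v j)) / (x - v k)) := fun k hk => by
    rw [eval_sub, eval_nodal_at_node hk, sub_zero, hshift, ← mul_prod_erase s _ hk, sub_self,
      zero_add, nodalWeight, prod_inv_distrib, prod_div_distrib]
    ring
  rw [sum_congr rfl hnode, ← mul_sum, eval_sub, hshift] at key
  have hB := eval_nodal_not_at_node hx
  rw [prod_div_distrib, ← eval_nodal, div_eq_iff hB]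
  linear_combination key

theorem prod_sub_sub_div_sub_add_mul_sum_eq_one (hvs : Set.InjOn v s) (c : F) {x : F}
    (hx : ∀ i ∈ s, x ≠ v i) :
    ∏ j ∈ s, (v j - x - c) / (v j - x) +
      c * ∑ k ∈ s, 1 / (v k - x) * ∏ j ∈ s.erase k, (v j - v k - c) / (v j - v k) = 1 := by
  have hflip : ∀ a b : F, (a - b - c) / (a - b) = (b - a + c) / (b - a) := fun a b => by
    rw [← neg_div_neg_eq (a - b - c)]
    ring_nf
  simp_rw [hflip, prod_sub_add_div_sub_eq_one_add_mul_sum hvs c hx, add_assoc, ← mul_add,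
    ← sum_add_distrib]
  rw [add_eq_left, mul_eq_zero]
  refine Or.inr (sum_eq_zero fun k _ => ?_)
  rw [← neg_sub x (v k), one_div, inv_neg]
  ring

end PartialFractions

theorem stmt_6_general (K : Type*) [Field K] (l : ℕ) (θ : ℕ → K)
    (hθ : ∀ j ∈ Finset.Icc 1 l, ∀ k ∈ Finset.Icc 1 l, j ≠ k → θ j ≠ θ k) :
    (∏ j ∈ Finset.Icc 1 (l - 1), (θ j - θ l - 1) / (θ j - θ l)) +
      ∑ k ∈ Finset.Icc 1 (l - 1), (1 / (θ k - θ l)) *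
        ∏ j ∈ (Finset.Icc 1 (l - 1)).erase k, (θ j - θ k - 1) / (θ j - θ k) = 1 := by
  have hsub : Icc 1 (l - 1) ⊆ Icc 1 l := Icc_subset_Icc le_rfl (Nat.sub_le l 1)
  have hinj : Set.InjOn θ (Icc 1 (l - 1)) := fun a ha b hb hab =>
    by_contra fun hne => hθ a (hsub ha) b (hsub hb) hne hab
  have hx : ∀ i ∈ Icc 1 (l - 1), θ l ≠ θ i := fun i hi => by
    rw [mem_Icc] at hi
    exact hθ l (by rw [mem_Icc]; omega) i (hsub (mem_Icc.2 hi)) (by omega)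
  simpa only [one_mul] using prod_sub_sub_div_sub_add_mul_sum_eq_one hinj 1 hx

theorem stmt_6 (K : Type*) [Field K] (l : ℕ) (hl : 1 ≤ l) (θ : ℕ → K)
    (hθ : ∀ j ∈ Finset.Icc 1 l, ∀ k ∈ Finset.Icc 1 l, j ≠ k → θ j ≠ θ k) :
    (∏ j ∈ Finset.Icc 1 (l - 1), (θ j - θ l - 1) / (θ j - θ l)) +
      ∑ k ∈ Finset.Icc 1 (l - 1), (1 / (θ k - θ l)) *
        ∏ j ∈ (Finset.Icc 1 (l - 1)).erase k, (θ j - θ k - 1) / (θ j - θ k) = 1 :=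
  stmt_6_general K l θ hθ
end

section
/- Let K be a field and θ_1, …, θ_n ∈ K elements such that θ_j − θ_k ∉ {0, 1} for all j ≠ k. Writing θ_{jk} := θ_j − θ_k, define lower triangular matrices M, N ∈ M_n(K) by: M_{ll} = ∏_{j=1}^{l−1} θ_{jl}/(θ_{jl} − 1); M_{lk} = −(1/(θ_{kl} − 1)) ∏_{j=1}^{k−1} θ_{jl}/(θ_{jl} − 1) for k < l; M_{lk} = 0 for k > l; N_{ll} = ∏_{j=1}^{l−1} (θ_{jl} − 1)/θ_{jl}; N_{lk} = (1/θ_{kl}) ∏_{j=1, j≠k}^{l−1} (θ_{jk} − 1)/θ_{jk} for k < l; N_{lk} = 0 for k > l. Then M·N = N·M = I_n. (M and N are the matrices of the mutually inverse changes of variables between the generators t_l and t°_l of the diagonal reduction algebra.) -/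
/-!
For fixed `m < l`, write `P k = ∏_{j<k} θ_{jl}/(θ_{jl} - 1)` and
`Q k = ∏_{j<k, j≠m} (θ_{jm} - 1)/θ_{jm}` (`mProd θ l k` and `nProd θ m k`). Then
`M_{lk} N_{km}` is, up to the factor `1/θ_{lm}`, the increment `P (k+1) Q (k+1) - P k Q k`
for `m < k < l`, because `θ_{kl} (θ_{km} - 1) - (θ_{kl} - 1) θ_{km} = θ_{lm}`; so the partial
sums of `∑_{k=m}^{l} M_{lk} N_{km}` telescope to `P (r+1) Q (r+1) / θ_{lm}`, and the last term
`M_{ll} N_{lm} = -P l Q l / θ_{lm}` cancels them. On the diagonal the two products are inverse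
factor by factor, and above it both matrices vanish.
-/

open Finset

theorem Fin.prod_Iio_eq_prod_range {M : Type*} [CommMonoid M] {n : ℕ} (f : ℕ → M)
    (l : Fin n) :
    ∏ j ∈ Iio l, f j = ∏ j ∈ range l, f j := by
  rw [← Nat.Iio_eq_range, ← Fin.map_valEmbedding_Iio, prod_map]
  rfl

theorem Fin.prod_Iio_erase_eq_prod_range_erase {M : Type*} [CommMonoid M] {n : ℕ} (f : ℕ → M)
    (l k : Fin n) : ∏ j ∈ (Iio l).erase k, f j = ∏ j ∈ (range l).erase k, f j := by
  rw [← Nat.Iio_eq_range, ← Fin.map_valEmbedding_Iio, ← Fin.valEmbedding_apply, ← map_erase,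
    prod_map]

namespace DiagonalReduction

variable {K : Type*} [Field K]

def mProd (t : ℕ → K) (l k : ℕ) : K :=
  ∏ j ∈ range k, (t j - t l) / (t j - t l - 1)

def nProd (t : ℕ → K) (m k : ℕ) : K :=
  ∏ j ∈ (range k).erase m, (t j - t m - 1) / (t j - t m)

def mCoeff (t : ℕ → K) (l k : ℕ) : K :=
  if k = l then mProd t l l
  else if k < l then -(1 / (t k - t l - 1)) * mProd t l k
  else 0

def nCoeff (t : ℕ → K) (l k : ℕ) : K :=
  if k = l then nProd t l l
  else if k < l then 1 / (t k - t l) * nProd t k l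
  else 0

variable {t : ℕ → K}

theorem mProd_succ (l k : ℕ) :
    mProd t l (k + 1) = mProd t l k * ((t k - t l) / (t k - t l - 1)) :=
  prod_range_succ _ _

theorem nProd_succ {m k : ℕ} (h : k ≠ m) :
    nProd t m (k + 1) = nProd t m k * ((t k - t m - 1) / (t k - t m)) := by
  rw [nProd, range_add_one, erase_insert_of_ne h, prod_insert (by simp), mul_comm, nProd]

theorem nProd_succ_self (m : ℕ) : nProd t m (m + 1) = nProd t m m := by
  rw [nProd, nProd, range_add_one, erase_insert (by simp), erase_eq_of_notMem (by simp)]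

theorem mCoeff_of_lt {l k : ℕ} (h : l < k) : mCoeff t l k = 0 := by
  rw [mCoeff, if_neg h.ne', if_neg (by omega)]

theorem nCoeff_of_lt {l k : ℕ} (h : l < k) : nCoeff t l k = 0 := by
  rw [nCoeff, if_neg h.ne', if_neg (by omega)]

variable {n : ℕ} (ht : ∀ i < n, ∀ j < n, i ≠ j → t i - t j ≠ 0 ∧ t i - t j ≠ 1)
include ht

theorem mCoeff_self_mul_nCoeff_self {l : ℕ} (hl : l < n) :
    mCoeff t l l * nCoeff t l l = 1 := by
  rw [mCoeff, nCoeff, if_pos rfl, if_pos rfl, mProd, nProd, erase_eq_of_notMem (by simp),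
    ← prod_mul_distrib]
  refine prod_eq_one fun j hj => ?_
  have hjl := mem_range.mp hj
  obtain ⟨h0, h1⟩ := ht j (hjl.trans hl) l hl hjl.ne
  have h1' : t j - t l - 1 ≠ 0 := sub_ne_zero.mpr h1
  field_simp

theorem sum_Icc_mCoeff_mul_nCoeff_eq {m l r : ℕ} (hl : l < n) (hmr : m ≤ r) (hrl : r < l) :
    ∑ k ∈ Icc m r, mCoeff t l k * nCoeff t k m =
      mProd t l (r + 1) * nProd t m (r + 1) / (t l - t m) := by
  have hlm : t l - t m ≠ 0 := (ht l hl m (by omega) (by omega)).1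
  have hkl : ∀ k < l, t k - t l - 1 ≠ 0 := fun k hk =>
    sub_ne_zero.mpr (ht k (by omega) l hl hk.ne).2
  induction r, hmr using Nat.le_induction with
  | base =>
    rw [Icc_self, sum_singleton, mCoeff, nCoeff, if_neg hrl.ne, if_pos hrl, if_pos rfl,
      mProd_succ, nProd_succ_self]
    have := hkl m hrl
    field_simp
    ring
  | succ r hmr ih =>
    rw [sum_Icc_succ_top (by omega), ih (by omega), mCoeff, nCoeff, if_neg (by omega),
      if_pos hrl, if_neg (by omega), if_pos (by omega), mProd_succ l (r + 1),
      nProd_succ (show r + 1 ≠ m by omega)]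
    have := hkl (r + 1) hrl
    have : t m - t (r + 1) ≠ 0 := (ht m (by omega) (r + 1) (by omega) (by omega)).1
    have : t (r + 1) - t m ≠ 0 := (ht (r + 1) (by omega) m (by omega) (by omega)).1
    field_simp
    ring

theorem sum_Icc_mCoeff_mul_nCoeff_of_lt {m l : ℕ} (hl : l < n) (hml : m < l) :
    ∑ k ∈ Icc m l, mCoeff t l k * nCoeff t k m = 0 := by
  obtain ⟨r, rfl⟩ : ∃ r, l = r + 1 := ⟨l - 1, by omega⟩
  rw [sum_Icc_succ_top (by omega), sum_Icc_mCoeff_mul_nCoeff_eq ht hl (by omega) (by omega),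
    mCoeff, nCoeff, if_pos rfl, if_neg (by omega), if_pos hml]
  have : t m - t (r + 1) ≠ 0 := (ht m (by omega) (r + 1) hl (by omega)).1
  have : t (r + 1) - t m ≠ 0 := (ht (r + 1) hl m (by omega) (by omega)).1
  field_simp
  ring

theorem sum_range_mCoeff_mul_nCoeff {l m : ℕ} (hl : l < n) (hm : m < n) :
    ∑ k ∈ range n, mCoeff t l k * nCoeff t k m = if l = m then 1 else 0 := by
  have hIcc : Icc m l ⊆ range n := fun k hk => mem_range.mpr (by grind)
  rw [← sum_subset hIcc fun k _ hk => ?_]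
  · rcases lt_trichotomy l m with hlm | rfl | hml
    · rw [Icc_eq_empty_of_lt hlm, sum_empty, if_neg hlm.ne]
    · rw [Icc_self, sum_singleton, if_pos rfl, mCoeff_self_mul_nCoeff_self ht hl]
    · rw [sum_Icc_mCoeff_mul_nCoeff_of_lt ht hl hml, if_neg hml.ne']
  · rcases not_and_or.mp (mt mem_Icc.mpr hk) with hkm | hlk
    · rw [nCoeff_of_lt (not_le.mp hkm), mul_zero]
    · rw [mCoeff_of_lt (not_le.mp hlk), zero_mul]

end DiagonalReduction

open DiagonalReduction in
theorem stmt_7_general (K : Type*) [Field K] (n : ℕ) (θ : Fin n → K)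
    (hθ : ∀ j k : Fin n, j ≠ k → θ j - θ k ≠ 0 ∧ θ j - θ k ≠ 1)
    (M N : Matrix (Fin n) (Fin n) K)
    (hM : ∀ l k : Fin n, M l k =
      if k = l then ∏ j ∈ Finset.Iio l, (θ j - θ l) / (θ j - θ l - 1)
      else if (k : ℕ) < (l : ℕ) then
        -(1 / (θ k - θ l - 1)) * ∏ j ∈ Finset.Iio k, (θ j - θ l) / (θ j - θ l - 1)
      else 0)
    (hN : ∀ l k : Fin n, N l k =
      if k = l then ∏ j ∈ Finset.Iio l, (θ j - θ l - 1) / (θ j - θ l)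
      else if (k : ℕ) < (l : ℕ) then
        (1 / (θ k - θ l)) * ∏ j ∈ (Finset.Iio l).erase k, (θ j - θ k - 1) / (θ j - θ k)
      else 0) :
    M * N = 1 ∧ N * M = 1 := by
  obtain ⟨t, rfl⟩ : ∃ t : ℕ → K, θ = fun j : Fin n => t j :=
    ⟨fun j => if h : j < n then θ ⟨j, h⟩ else 0, by funext j; simp⟩
  have ht : ∀ i < n, ∀ j < n, i ≠ j → t i - t j ≠ 0 ∧ t i - t j ≠ 1 :=
    fun i hi j hj hij => hθ ⟨i, hi⟩ ⟨j, hj⟩ (by simpa [Fin.ext_iff] using hij)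
  have hM' : ∀ l k : Fin n, M l k = mCoeff t l k := by
    intro l k
    rw [hM, mCoeff, mProd, mProd,
      Fin.prod_Iio_eq_prod_range (fun j => (t j - t l) / (t j - t l - 1)),
      Fin.prod_Iio_eq_prod_range (fun j => (t j - t l) / (t j - t l - 1))]
    simp only [Fin.val_inj]
  have hN' : ∀ l k : Fin n, N l k = nCoeff t l k := by
    intro l k
    rw [hN, nCoeff, nProd, nProd, erase_eq_of_notMem notMem_range_self,
      Fin.prod_Iio_eq_prod_range (fun j => (t j - t l - 1) / (t j - t l)),
      Fin.prod_Iio_erase_eq_prod_range_erase (fun j => (t j - t k - 1) / (t j - t k))]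
    simp only [Fin.val_inj]
  have hMN : M * N = 1 := by
    ext l m
    rw [Matrix.mul_apply, Matrix.one_apply]
    simp only [hM', hN']
    rw [Fin.sum_univ_eq_sum_range (fun k => mCoeff t l k * nCoeff t k m),
      sum_range_mCoeff_mul_nCoeff ht l.isLt m.isLt]
    simp only [Fin.val_inj]
  exact ⟨hMN, mul_eq_one_comm.mp hMN⟩

theorem stmt_7 (K : Type*) [Field K] (n : ℕ) (hn : 1 ≤ n) (θ : Fin n → K)
    (hθ : ∀ j k : Fin n, j ≠ k → θ j - θ k ≠ 0 ∧ θ j - θ k ≠ 1)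
    (M N : Matrix (Fin n) (Fin n) K)
    (hM : ∀ l k : Fin n, M l k =
      if k = l then ∏ j ∈ Finset.Iio l, (θ j - θ l) / (θ j - θ l - 1)
      else if (k : ℕ) < (l : ℕ) then
        -(1 / (θ k - θ l - 1)) * ∏ j ∈ Finset.Iio k, (θ j - θ l) / (θ j - θ l - 1)
      else 0)
    (hN : ∀ l k : Fin n, N l k =
      if k = l then ∏ j ∈ Finset.Iio l, (θ j - θ l - 1) / (θ j - θ l)
      else if (k : ℕ) < (l : ℕ) then
        (1 / (θ k - θ l)) * ∏ j ∈ (Finset.Iio l).erase k, (θ j - θ k - 1) / (θ j - θ k)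
      else 0) :
    M * N = 1 ∧ N * M = 1 :=
  stmt_7_general K n θ hθ M N hM hN
end

section
/- Let K be a field, n ≥ 1, and let θ_1, …, θ_n ∈ K be pairwise distinct. Writing θ_{jk} := θ_j − θ_k, for every k ∈ {1, …, n} the following identity holds: ∏_{j=1}^{k−1} (θ_{jk} − 1)/θ_{jk} + Σ_{l=k+1}^{n} (1/θ_{kl}) · ∏_{j=1, j≠k}^{l−1} (θ_{jk} − 1)/θ_{jk} = ∏_{a=1, a≠k}^{n} (θ_{ka} + 1)/θ_{ka}. (This is the identity expressing the linear central element Σ_i t_i of the diagonal reduction algebra in the new generators: Σ_i t_i = Σ_i t°_i ∏_{a≠i} (θ_{ia}+1)/θ_{ia}.) -/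
/-!
Write `P m` (`shiftedRatioProd θ k m`) for the product of `(θ_{ak} - 1) / θ_{ak} = 1 - 1 / θ_{ak}`
over `a ∈ [1, m]`, `a ≠ k`. Then `P l - P (l - 1) = (1 / θ_{kl}) * P (l - 1)` for `l > k`, so the sum telescopes to
`P n - P k`. Since `P k` is the first product and `(θ_{ka} + 1) / θ_{ka} = (θ_{ak} - 1) / θ_{ak}`,
both sides equal `P n`.
-/

open Finset

theorem Finset.sum_Icc_add_one_sub_pred {G : Type*} [AddCommGroup G] (f : ℕ → G) {m n : ℕ}
    (hmn : m ≤ n) : ∑ l ∈ Icc (m + 1) n, (f l - f (l - 1)) = f n - f m := by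
  rw [← Ico_add_one_right_eq_Icc, ← sum_Ico_add' (fun l ↦ f l - f (l - 1))]
  simpa only [Nat.add_sub_cancel] using sum_Ico_sub f hmn

section ShiftedRatioProd

variable {K : Type*} [Field K] (θ : ℕ → K) (k : ℕ)

def shiftedRatioProd (m : ℕ) : K :=
  ∏ a ∈ (Icc 1 m).erase k, (θ a - θ k - 1) / (θ a - θ k)

theorem shiftedRatioProd_self :
    shiftedRatioProd θ k k = ∏ j ∈ Icc 1 (k - 1), (θ j - θ k - 1) / (θ j - θ k) := by
  have hIco : Ico 1 k = Icc 1 (k - 1) := by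
    ext j
    simp only [mem_Ico, mem_Icc]
    omega
  rw [shiftedRatioProd, Icc_erase_right, hIco]

variable {θ k}

theorem shiftedRatioProd_add_one_sub {m : ℕ} (h : θ (m + 1) ≠ θ k) :
    shiftedRatioProd θ k (m + 1) - shiftedRatioProd θ k m =
      1 / (θ k - θ (m + 1)) * shiftedRatioProd θ k m := by
  have hmk : m + 1 ≠ k := fun hmk ↦ h (congrArg θ hmk)
  have hsub : θ k - θ (m + 1) ≠ 0 := sub_ne_zero.mpr h.symm
  rw [shiftedRatioProd, ← insert_Icc_right_eq_Icc_add_one (by omega), erase_insert_of_ne hmk,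
    prod_insert (by simp), ← shiftedRatioProd]
  field_simp
  ring

theorem shiftedRatioProd_eq_add_sum {n : ℕ} (hkn : k ≤ n) (hθ : ∀ l ∈ Icc (k + 1) n, θ l ≠ θ k) :
    shiftedRatioProd θ k n = shiftedRatioProd θ k k +
      ∑ l ∈ Icc (k + 1) n, 1 / (θ k - θ l) * shiftedRatioProd θ k (l - 1) := by
  have hstep : ∀ l ∈ Icc (k + 1) n, 1 / (θ k - θ l) * shiftedRatioProd θ k (l - 1) =
      shiftedRatioProd θ k l - shiftedRatioProd θ k (l - 1) := fun l hl ↦ by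
    obtain ⟨m, rfl⟩ : ∃ m, l = m + 1 := ⟨l - 1, by grind⟩
    exact (shiftedRatioProd_add_one_sub (hθ _ hl)).symm
  rw [sum_congr rfl hstep, sum_Icc_add_one_sub_pred _ hkn, add_sub_cancel]

end ShiftedRatioProd

theorem stmt_19_general (K : Type*) [Field K] (n : ℕ) (θ : ℕ → K)
    (hθ : ∀ j ∈ Finset.Icc 1 n, ∀ k ∈ Finset.Icc 1 n, j ≠ k → θ j ≠ θ k)
    (k : ℕ) (hk : k ∈ Finset.Icc 1 n) :
    (∏ j ∈ Finset.Icc 1 (k - 1), (θ j - θ k - 1) / (θ j - θ k)) +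
      ∑ l ∈ Finset.Icc (k + 1) n, (1 / (θ k - θ l)) *
        ∏ j ∈ (Finset.Icc 1 (l - 1)).erase k, (θ j - θ k - 1) / (θ j - θ k)
    = ∏ a ∈ (Finset.Icc 1 n).erase k, (θ k - θ a + 1) / (θ k - θ a) := by
  have hkn := (mem_Icc.mp hk).2
  have hflip : ∀ a, (θ k - θ a + 1) / (θ k - θ a) = (θ a - θ k - 1) / (θ a - θ k) := fun a ↦ by
    rw [← neg_div_neg_eq]; ring_nf
  simp only [hflip, ← shiftedRatioProd_self]
  refine (shiftedRatioProd_eq_add_sum hkn fun l hl ↦ hθ l ?_ k hk ?_).symm <;> grind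

theorem stmt_19 (K : Type*) [Field K] (n : ℕ) (hn : 1 ≤ n) (θ : ℕ → K)
    (hθ : ∀ j ∈ Finset.Icc 1 n, ∀ k ∈ Finset.Icc 1 n, j ≠ k → θ j ≠ θ k)
    (k : ℕ) (hk : k ∈ Finset.Icc 1 n) :
    (∏ j ∈ Finset.Icc 1 (k - 1), (θ j - θ k - 1) / (θ j - θ k)) +
      ∑ l ∈ Finset.Icc (k + 1) n, (1 / (θ k - θ l)) *
        ∏ j ∈ (Finset.Icc 1 (l - 1)).erase k, (θ j - θ k - 1) / (θ j - θ k)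
    = ∏ a ∈ (Finset.Icc 1 n).erase k, (θ k - θ a + 1) / (θ k - θ a) :=
  stmt_19_general K n θ hθ k hk
end
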